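/- arXiv:math/0608473 — 3 statements merged into one kernel-verified Lean document; each statement's English description precedes it below -/
import Mathlib

section
/- Let K be an algebraically closed field of characteristic zero and n ≥ 2. The polynomial f(x₁,…,xₙ) = ∏_{i=1}^n (xᵢ + 1) − ∏_{i=1}^n xᵢ is irreducible in K[x₁,…,xₙ]. -/
open MvPolynomial

/-- A degree-one primitive polynomial over a domain is irreducible. -/
lemma irreducible_of_natDegree_eq_one_of_primitive {R : Type*} [CommRing R] [IsDomain R]
    {p : Polynomial R} (h1 : p.natDegree = 1)
    (h2 : ∀ r : R, Polynomial.C r ∣ p → IsUnit r) : Irreducible p := by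
  have hp0 : p ≠ 0 := by
    intro h; rw [h] at h1; simp at h1
  constructor
  · intro hu
    have := Polynomial.natDegree_eq_zero_of_isUnit hu
    omega
  · intro a b hab
    have ha : a ≠ 0 := by rintro rfl; simp at hab; exact hp0 hab
    have hb : b ≠ 0 := by rintro rfl; simp at hab; exact hp0 hab
    have hdeg : a.natDegree + b.natDegree = 1 := by
      rw [← Polynomial.natDegree_mul ha hb, ← hab, h1]
    rcases Nat.eq_zero_or_pos a.natDegree with h | h
    · left
      have := Polynomial.eq_C_of_natDegree_eq_zero h
      rw [this, Polynomial.isUnit_C]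
      exact h2 _ ⟨b, by rw [← this, hab]⟩
    · right
      have hbd : b.natDegree = 0 := by omega
      have := Polynomial.eq_C_of_natDegree_eq_zero hbd
      rw [this, Polynomial.isUnit_C]
      exact h2 _ ⟨a, by rw [← this, hab, mul_comm]⟩

/-- `X i + 1` is prime in a multivariate polynomial ring over a field. -/
lemma prime_X_add_one {K : Type*} [Field K] (m : ℕ) (i : Fin (m + 1)) :
    Prime (X i + 1 : MvPolynomial (Fin (m + 1)) K) := by
  have h0 : Prime (Polynomial.X - Polynomial.C (-1 : MvPolynomial (Fin m) K)) :=
    Polynomial.prime_X_sub_C (-1)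
  have h0' : Prime (Polynomial.X + 1 : Polynomial (MvPolynomial (Fin m) K)) := by
    simpa [sub_neg_eq_add] using h0
  have h1 : Prime (X 0 + 1 : MvPolynomial (Fin (m + 1)) K) := by
    refine (MulEquiv.prime_iff (finSuccEquiv K m).toMulEquiv).mp ?_
    show Prime ((finSuccEquiv K m) (X 0 + 1))
    rw [map_add, map_one, finSuccEquiv_X_zero]
    exact h0'
  have h2 : (renameEquiv K (Equiv.swap (0 : Fin (m + 1)) i))
      (X 0 + 1 : MvPolynomial (Fin (m + 1)) K) = X i + 1 := by
    simp [renameEquiv_apply, Equiv.swap_apply_left]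
  have h3 : Prime ((renameEquiv K (Equiv.swap (0 : Fin (m + 1)) i))
      (X 0 + 1 : MvPolynomial (Fin (m + 1)) K)) :=
    (MulEquiv.prime_iff (renameEquiv K (Equiv.swap (0 : Fin (m + 1)) i)).toMulEquiv).mpr h1
  rwa [h2] at h3

/-- `f` in `m+1` variables does not vanish when `x_i = -1` and the rest are `1`. -/
lemma eval_swap_ne {K : Type*} [Field K] (m : ℕ) (i : Fin (m + 1)) :
    eval (fun j => if j = i then (-1 : K) else 1)
      ((∏ j : Fin (m + 1), (X j + 1)) - ∏ j : Fin (m + 1), X j) = 1 := by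
  rw [map_sub, map_prod, map_prod]
  have h1 : (∏ j : Fin (m + 1), eval (fun j => if j = i then (-1 : K) else 1) (X j + 1)) = 0 := by
    apply Finset.prod_eq_zero (Finset.mem_univ i)
    simp
  have h2 : (∏ j : Fin (m + 1), eval (fun j => if j = i then (-1 : K) else 1) (X j)) = -1 := by
    simp only [eval_X]
    rw [Finset.prod_ite_eq' Finset.univ i (fun _ => (-1 : K))]
    simp
  rw [h1, h2]
  ring

/-- Over an algebraically closed field of characteristic zero, the polynomial
`f(x₁,…,xₙ) = ∏ (xᵢ + 1) - ∏ xᵢ` is irreducible (for `n ≥ 2`). -/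
theorem irreducible_prod_add_one_sub_prod
    {K : Type*} [Field K] [IsAlgClosed K] [CharZero K] (n : ℕ) (hn : 2 ≤ n) :
    Irreducible ((∏ i : Fin n, (X i + 1)) - ∏ i : Fin n, X i : MvPolynomial (Fin n) K) := by
  obtain ⟨m, rfl⟩ : ∃ m, n = m + 2 := ⟨n - 2, by omega⟩
  clear hn
  set B : MvPolynomial (Fin (m + 1)) K := ∏ i : Fin (m + 1), (X i + 1) with hB
  set A' : MvPolynomial (Fin (m + 1)) K := ∏ i : Fin (m + 1), X i with hA'
  set A : MvPolynomial (Fin (m + 1)) K := B - A' with hA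
  -- nonvanishing facts
  have hBne : B ≠ 0 := by
    intro h
    have := congrArg (eval (fun _ => (0 : K))) h
    simp [hB] at this
  have hAne : A ≠ 0 := by
    intro h
    have := congrArg (eval (fun _ => (0 : K))) h
    simp [hA, hB, hA', Finset.prod_eq_zero (Finset.mem_univ (0 : Fin (m + 1)))] at this
  -- the image under finSuccEquiv
  have key : (finSuccEquiv K (m + 1))
      ((∏ i : Fin (m + 2), (X i + 1)) - ∏ i : Fin (m + 2), X i : MvPolynomial (Fin (m + 2)) K)
      = Polynomial.C A * Polynomial.X + Polynomial.C B := by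
    rw [map_sub, map_prod, map_prod]
    rw [Fin.prod_univ_succ (fun i => (finSuccEquiv K (m + 1)) (X i + 1)),
      Fin.prod_univ_succ (fun i => (finSuccEquiv K (m + 1)) (X i))]
    simp only [map_add, map_one, finSuccEquiv_X_zero, finSuccEquiv_X_succ]
    have e1 : (∏ x : Fin (m + 1), (Polynomial.C (X x) + 1)
        : Polynomial (MvPolynomial (Fin (m + 1)) K)) = Polynomial.C B := by
      rw [hB, map_prod]; simp
    have e2 : (∏ x : Fin (m + 1), Polynomial.C (X x)
        : Polynomial (MvPolynomial (Fin (m + 1)) K)) = Polynomial.C A' := by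
      rw [hA', map_prod]
    have e3 : Polynomial.C (A : MvPolynomial (Fin (m + 1)) K)
        = Polynomial.C B - Polynomial.C A' := by rw [hA, map_sub]
    rw [e1, e2, e3]
    ring
  refine (MulEquiv.irreducible_iff (finSuccEquiv K (m + 1))).mp ?_
  rw [key]
  apply irreducible_of_natDegree_eq_one_of_primitive
  · exact Polynomial.natDegree_linear hAne
  · -- primitivity
    intro c hc
    by_contra hcu
    have hcd : ∀ k, c ∣ (Polynomial.C A * Polynomial.X + Polynomial.C B).coeff k :=
      (Polynomial.C_dvd_iff_dvd_coeff c _).1 hc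
    have hcB : c ∣ B := by simpa using hcd 0
    have hcA : c ∣ A := by simpa using hcd 1
    have hc0 : c ≠ 0 := by rintro rfl; exact hBne (zero_dvd_iff.mp hcB)
    obtain ⟨d, hdirr, hdc⟩ := WfDvdMonoid.exists_irreducible_factor hcu hc0
    have hdprime : Prime d := (UniqueFactorizationMonoid.irreducible_iff_prime).1 hdirr
    have hdB : d ∣ B := hdc.trans hcB
    have hdA : d ∣ A := hdc.trans hcA
    obtain ⟨i, _, hdi⟩ := hdprime.exists_mem_finset_dvd hdB
    -- d is associated to X i + 1
    have hXi : Prime (X i + 1 : MvPolynomial (Fin (m + 1)) K) := prime_X_add_one m i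
    obtain ⟨e, he⟩ := hdi
    have heu : IsUnit e := by
      rcases hXi.irreducible.isUnit_or_isUnit he with h | h
      · exact absurd h hdirr.not_isUnit
      · exact h
    have hassoc : Associated d (X i + 1 : MvPolynomial (Fin (m + 1)) K) := by
      obtain ⟨u, hu⟩ := heu
      exact ⟨u, by rw [hu, ← he]⟩
    have hXiA : (X i + 1 : MvPolynomial (Fin (m + 1)) K) ∣ A :=
      hassoc.dvd_iff_dvd_left.mp hdA
    -- evaluate to get a contradiction
    obtain ⟨g, hg⟩ := hXiA
    have := congrArg (eval (fun j => if j = i then (-1 : K) else 1)) hg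
    rw [eval_swap_ne m i] at this
    simp [map_mul] at this
end

section
/- Let K be an algebraically closed field of characteristic zero, n ≥ 3, and a ∈ K with (1 + a)ⁿ = aⁿ. Let v = (v₁,…,vₙ) ∈ Kⁿ with v₁ + … + vₙ = 0, and assume the leading coefficient condition Σ_{i=1}^n ∏_{j≠i} (vⱼ − a) ≠ 0. Then the set { s ∈ K : s ≠ 0 and ∏_{i=1}^n (a + s(vᵢ − a) + 1) − ∏_{i=1}^n (a + s(vᵢ − a)) = 0 } is finite of cardinality at most n − 2. -/
open Polynomial Finset

lemma coeff_prod_linear {K : Type*} [CommRing K] {n : ℕ} (c d : Fin n → K) (k : ℕ) :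
    (∏ i, (C (c i) * X + C (d i))).coeff k
      = ∑ S ∈ (Finset.univ : Finset (Fin n)).powersetCard k,
          (∏ i ∈ S, c i) * ∏ i ∈ Finset.univ \ S, d i := by
  rw [Finset.prod_add, finset_sum_coeff]
  rw [Finset.powersetCard_eq_filter, Finset.sum_filter]
  refine Finset.sum_congr rfl fun S _ => ?_
  have : (∏ i ∈ S, (C (c i) * X)) * ∏ i ∈ Finset.univ \ S, C (d i)
      = C ((∏ i ∈ S, c i) * ∏ i ∈ Finset.univ \ S, d i) * X ^ S.card := by
    rw [Finset.prod_mul_distrib, Finset.prod_const, map_mul, map_prod, map_prod]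
    ring
  rw [this, coeff_C_mul, coeff_X_pow]
  by_cases h : S.card = k
  · simp [h]
  · simp [h, Ne.symm h]

lemma sum_powersetCard_pred {K : Type*} [CommRing K] {n : ℕ} (hn : 1 ≤ n) (c d : Fin n → K) :
    ∑ S ∈ (Finset.univ : Finset (Fin n)).powersetCard (n-1),
        (∏ i ∈ S, c i) * ∏ i ∈ Finset.univ \ S, d i
      = ∑ i, (∏ j ∈ Finset.univ.erase i, c j) * d i := by
  have key : ∀ i : Fin n, Finset.univ \ Finset.univ.erase i = {i} := by
    intro i
    rw [Finset.erase_eq, Finset.sdiff_sdiff_eq_self (by simp)]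
  refine (Finset.sum_bij (fun (i : Fin n) _ => Finset.univ.erase i) ?_ ?_ ?_ ?_).symm
  · intro i _
    rw [Finset.mem_powersetCard]
    refine ⟨Finset.subset_univ _, ?_⟩
    rw [Finset.card_erase_of_mem (Finset.mem_univ i), Finset.card_univ, Fintype.card_fin]
  · intro i _ j _ h
    by_contra hij
    have : i ∈ Finset.univ.erase j := Finset.mem_erase.2 ⟨hij, Finset.mem_univ i⟩
    rw [← h] at this
    exact (Finset.mem_erase.1 this).1 rfl
  · intro S hS
    rw [Finset.mem_powersetCard] at hS
    have hcard : (Finset.univ \ S).card = 1 := by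
      rw [Finset.card_sdiff_of_subset hS.1, Finset.card_univ, Fintype.card_fin, hS.2]
      omega
    obtain ⟨i, hi⟩ := Finset.card_eq_one.1 hcard
    refine ⟨i, Finset.mem_univ i, ?_⟩
    show Finset.univ.erase i = S
    rw [Finset.erase_eq, ← hi, Finset.sdiff_sdiff_eq_self hS.1]
  · intro i _
    rw [key i, Finset.prod_singleton]

/-- Fiber bound for the projection of the hypersurface `∏ (xᵢ + 1) - ∏ xᵢ = 0` from the
point `(a,…,a)` to the hyperplane `∑ xᵢ = 0`: over an algebraically closed field of
characteristic zero, if `n ≥ 3`, `(1 + a)ⁿ = aⁿ`, `∑ vᵢ = 0`, and the leading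
coefficient `∑ᵢ ∏_{j ≠ i} (vⱼ - a)` is nonzero, then the set of nonzero parameters `s`
with `a + s(v - a)` on the hypersurface is finite of cardinality at most `n - 2`. -/
theorem fiber_of_projection_card_le
    {K : Type*} [Field K] [IsAlgClosed K] [CharZero K] (n : ℕ) (hn : 3 ≤ n)
    (a : K) (ha : (1 + a) ^ n = a ^ n) (v : Fin n → K) (hv : ∑ i, v i = 0)
    (hlead : ∑ i : Fin n, ∏ j ∈ Finset.univ.erase i, (v j - a) ≠ 0) :
    ({s : K | s ≠ 0 ∧
        (∏ i : Fin n, (a + s * (v i - a) + 1)) - ∏ i : Fin n, (a + s * (v i - a)) = 0}).Finite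
      ∧
    ({s : K | s ≠ 0 ∧
        (∏ i : Fin n, (a + s * (v i - a) + 1)) - ∏ i : Fin n, (a + s * (v i - a)) = 0}).ncard
      ≤ n - 2 := by
  classical
  set c : Fin n → K := fun i => v i - a with hc
  set P : K[X] := (∏ i, (C (c i) * X + C (a + 1))) - ∏ i, (C (c i) * X + C a) with hP
  -- evaluation
  have heval : ∀ s : K, P.eval s
      = (∏ i : Fin n, (a + s * (v i - a) + 1)) - ∏ i : Fin n, (a + s * (v i - a)) := by
    intro s
    simp only [hP, eval_sub, eval_prod, eval_add, eval_mul, eval_C, eval_X, hc]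
    congr 1 <;> exact Finset.prod_congr rfl fun i _ => by ring
  -- coefficient n-1
  have hcoeff : P.coeff (n - 1)
      = ∑ i : Fin n, ∏ j ∈ Finset.univ.erase i, (v j - a) := by
    rw [hP, coeff_sub, coeff_prod_linear, coeff_prod_linear,
      sum_powersetCard_pred (by omega), sum_powersetCard_pred (by omega),
      ← Finset.sum_sub_distrib]
    refine Finset.sum_congr rfl fun i _ => by rw [hc]; ring
  have hc1 : P.coeff (n - 1) ≠ 0 := hcoeff ▸ hlead
  have hP0 : P ≠ 0 := fun h => hc1 (by simp [h])
  -- coefficient n is zero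
  have hcn : P.coeff n = 0 := by
    rw [hP, coeff_sub, coeff_prod_linear, coeff_prod_linear]
    have : (Finset.univ : Finset (Fin n)).powersetCard n = {Finset.univ} := by
      have := Finset.powersetCard_self (Finset.univ : Finset (Fin n))
      rwa [Finset.card_univ, Fintype.card_fin] at this
    rw [this, Finset.sum_singleton, Finset.sum_singleton]
    simp
  -- degree bound
  have hdegn : P.natDegree ≤ n := by
    refine le_trans (natDegree_sub_le _ _) (max_le ?_ ?_) <;>
    · refine le_trans (Polynomial.natDegree_prod_le _ _)
        (le_trans (Finset.sum_le_sum fun i _ => natDegree_linear_le) (by simp))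
  have hdeg : P.natDegree ≤ n - 1 := by
    rw [natDegree_le_iff_coeff_eq_zero]
    intro m hm
    rcases eq_or_lt_of_le (Nat.succ_le_of_lt hm) with h | h
    · have : m = n := by omega
      rw [this]; exact hcn
    · exact coeff_eq_zero_of_natDegree_lt (lt_of_le_of_lt hdegn (by omega))
  -- X divides P
  have hdvd : X ∣ P := by
    rw [Polynomial.X_dvd_iff, coeff_zero_eq_eval_zero, heval]
    have e1 : ∀ i : Fin n, a + (0:K) * (v i - a) + 1 = 1 + a := fun i => by ring
    have e2 : ∀ i : Fin n, a + (0:K) * (v i - a) = a := fun i => by ring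
    have h1 : ∏ i : Fin n, (a + (0:K) * (v i - a) + 1) = (1 + a) ^ n := by
      rw [Finset.prod_congr rfl fun i _ => e1 i, Finset.prod_const, Finset.card_univ,
        Fintype.card_fin]
    have h2 : ∏ i : Fin n, (a + (0:K) * (v i - a)) = a ^ n := by
      rw [Finset.prod_congr rfl fun i _ => e2 i, Finset.prod_const, Finset.card_univ,
        Fintype.card_fin]
    rw [h1, h2, ha, sub_self]
  obtain ⟨Q, hQ⟩ := hdvd
  have hQ0 : Q ≠ 0 := by rintro rfl; simp [hQ] at hP0
  have hQdeg : Q.natDegree ≤ n - 2 := by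
    have := hdeg
    rw [hQ, natDegree_mul X_ne_zero hQ0, natDegree_X] at this
    omega
  -- the set is contained in roots of Q
  have hsub : {s : K | s ≠ 0 ∧
        (∏ i : Fin n, (a + s * (v i - a) + 1)) - ∏ i : Fin n, (a + s * (v i - a)) = 0}
      ⊆ ↑Q.roots.toFinset := by
    rintro s ⟨hs0, hs⟩
    have : P.eval s = 0 := by rw [heval]; exact hs
    rw [hQ, eval_mul, eval_X, mul_eq_zero] at this
    rcases this with h | h
    · exact absurd h hs0
    · simp only [Multiset.mem_toFinset, Finset.coe_sort_coe, Finset.mem_coe]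
      exact (mem_roots hQ0).2 h
  refine ⟨Set.Finite.subset (Q.roots.toFinset : Finset K).finite_toSet hsub, ?_⟩
  calc _ ≤ (Q.roots.toFinset : Set K).ncard :=
        Set.ncard_le_ncard hsub (Q.roots.toFinset : Finset K).finite_toSet
    _ = Q.roots.toFinset.card := by rw [Set.ncard_coe_finset]
    _ ≤ Multiset.card Q.roots := Multiset.toFinset_card_le _
    _ ≤ Q.natDegree := Polynomial.card_roots' Q
    _ ≤ n - 2 := hQdeg
end

section
/- Let K be a field and let t₁, t₂, t₃ ∈ K be nonzero with t₁t₂t₃ = 1. Define zᵢ := tᵢ − tᵢ⁻¹ for i = 1,2,3, and s₁ := z₁ − z₂, s₂ := z₁ − z₃. Then t₂ · (t₁²s₁ + t₁s₂ − t₁³ − t₁² + t₁ + 1) = t₁² − 1. -/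
theorem g2_torus_t2_identity_general
    {K : Type*} [Field K] (t₁ t₂ t₃ : K)
    (h₁ : t₁ ≠ 0) (h₂ : t₂ ≠ 0) (hprod : t₁ * t₂ * t₃ = 1) :
    (t₂ * (t₁ ^ 2 * ((t₁ - t₁⁻¹) - (t₂ - t₂⁻¹)) + t₁ * ((t₁ - t₁⁻¹) - (t₃ - t₃⁻¹))
        - t₁ ^ 3 - t₁ ^ 2 + t₁ + 1)) = t₁ ^ 2 - 1 := by
  obtain rfl : t₃ = (t₁ * t₂)⁻¹ := eq_inv_of_mul_eq_one_right hprod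
  field_simp
  ring

/-- In the function field of the maximal torus of `G₂`: for nonzero `t₁, t₂, t₃` with
`t₁t₂t₃ = 1`, setting `zᵢ = tᵢ - tᵢ⁻¹`, `s₁ = z₁ - z₂`, `s₂ = z₁ - z₃`, one has
`t₂ (t₁²s₁ + t₁s₂ - t₁³ - t₁² + t₁ + 1) = t₁² - 1`. -/
theorem g2_torus_t2_identity
    {K : Type*} [Field K] (t₁ t₂ t₃ : K)
    (h₁ : t₁ ≠ 0) (h₂ : t₂ ≠ 0) (h₃ : t₃ ≠ 0) (hprod : t₁ * t₂ * t₃ = 1) :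
    (t₂ * (t₁ ^ 2 * ((t₁ - t₁⁻¹) - (t₂ - t₂⁻¹)) + t₁ * ((t₁ - t₁⁻¹) - (t₃ - t₃⁻¹))
        - t₁ ^ 3 - t₁ ^ 2 + t₁ + 1)) = t₁ ^ 2 - 1 :=
  g2_torus_t2_identity_general t₁ t₂ t₃ h₁ h₂ hprod
end
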